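/- Let R = ℤ[[y]] with filtration I_n generated by y^(⌈n/4⌉) (modeling K(HP^∞) with generator in filtration 4). Then for each n, every ring automorphism of R/I_n preserving the filtration lifts to a filtration-preserving ring endomorphism of R/I_(n+1). -/

import Mathlib

open PowerSeries

/-- The filtration ideals of `ℤ[[y]]` modeling `K(HP^∞)`: the generator `y` sits in
filtration degree 4, so `I n = (y^⌈n/4⌉)`. -/
noncomputable def Ifil (n : ℕ) : Ideal (PowerSeries ℤ) :=
  Ideal.span {PowerSeries.X ^ ((n + 3) / 4)}

/-- The filtration is decreasing. -/
theorem Ifil_antitone (n : ℕ) : Ifil (n + 1) ≤ Ifil n := by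
  apply Ideal.span_le.2
  rintro _ rfl
  have h : (n + 3) / 4 ≤ (n + 1 + 3) / 4 := Nat.div_le_div_right (by omega)
  exact Ideal.mem_span_singleton.2 (pow_dvd_pow _ h)

/-- Every filtration-preserving ring automorphism of `R/I_n` lifts to a
filtration-preserving ring endomorphism of `R/I_(n+1)`. -/
theorem stmt_14 (n : ℕ) (φ : (PowerSeries ℤ ⧸ Ifil n) ≃+* (PowerSeries ℤ ⧸ Ifil n))
    (hφ : ∀ m : ℕ, ∀ a ∈ (Ifil m).map (Ideal.Quotient.mk (Ifil n)),
      φ a ∈ (Ifil m).map (Ideal.Quotient.mk (Ifil n))) :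
    ∃ ψ : (PowerSeries ℤ ⧸ Ifil (n + 1)) →+* (PowerSeries ℤ ⧸ Ifil (n + 1)),
      (∀ m : ℕ, ∀ a ∈ (Ifil m).map (Ideal.Quotient.mk (Ifil (n + 1))),
        ψ a ∈ (Ifil m).map (Ideal.Quotient.mk (Ifil (n + 1)))) ∧
      (∀ x : PowerSeries ℤ,
        Ideal.Quotient.factor (Ifil_antitone n)
            (ψ (Ideal.Quotient.mk (Ifil (n + 1)) x))
          = φ (Ideal.Quotient.mk (Ifil n) x)) := by
  classical
  set K : ℕ := (n + 1 + 3) / 4 with hKdef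
  have hK1 : 1 ≤ K := by omega
  have hIK : Ifil (n + 1) = Ideal.span {(X : PowerSeries ℤ) ^ K} := rfl
  -- lift φ(X̄) to a power series of the form X * h
  have hXmem : (Ideal.Quotient.mk (Ifil n)) X ∈ (Ifil 4).map (Ideal.Quotient.mk (Ifil n)) := by
    apply Ideal.mem_map_of_mem
    have : (X : PowerSeries ℤ) ^ ((4 + 3) / 4) = X := by norm_num
    exact this ▸ Ideal.subset_span rfl
  obtain ⟨w, hw, hwX⟩ :=
    (Ideal.mem_map_iff_of_surjective _ Ideal.Quotient.mk_surjective).1 (hφ 4 _ hXmem)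
  have hw' : (X : PowerSeries ℤ) ∣ w := by
    have := Ideal.mem_span_singleton.1 hw
    simpa using this
  obtain ⟨h, rfl⟩ := hw'
  set b : PowerSeries ℤ ⧸ Ifil (n + 1) := Ideal.Quotient.mk (Ifil (n + 1)) (X * h) with hb
  set c : ℤ →+* PowerSeries ℤ ⧸ Ifil (n + 1) := Int.castRingHom _ with hc
  have hbK : b ^ K = 0 := by
    rw [hb, ← map_pow, Ideal.Quotient.eq_zero_iff_mem, mul_pow, hIK]
    exact Ideal.mem_span_singleton.2 ⟨h ^ K, rfl⟩
  -- evaluation kills polynomials with vanishing low coefficients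
  have evalzero : ∀ p : Polynomial ℤ, (∀ i < K, p.coeff i = 0) → p.eval₂ c b = 0 := by
    intro p hp
    obtain ⟨r, rfl⟩ := Polynomial.X_pow_dvd_iff.2 hp
    rw [Polynomial.eval₂_mul, Polynomial.eval₂_X_pow, hbK, zero_mul]
  have evalcongr : ∀ p q : Polynomial ℤ, (∀ i < K, p.coeff i = q.coeff i) →
      p.eval₂ c b = q.eval₂ c b := by
    intro p q hpq
    have : (p - q).eval₂ c b = 0 := by
      apply evalzero
      intro i hi
      simp [Polynomial.coeff_sub, hpq i hi]
    rw [Polynomial.eval₂_sub, sub_eq_zero] at this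
    exact this
  -- the lifted endomorphism on the power series ring
  set E : PowerSeries ℤ → PowerSeries ℤ ⧸ Ifil (n + 1) :=
    fun f => (trunc K f).eval₂ c b with hE
  have E_one : E 1 = 1 := by
    rw [hE]
    have : trunc K (1 : PowerSeries ℤ) = 1 := by
      obtain ⟨K', hK'⟩ : ∃ K', K = K' + 1 := ⟨K - 1, by omega⟩
      rw [hK']; exact trunc_one K'
    simp [this]
  have E_mul : ∀ f g : PowerSeries ℤ, E (f * g) = E f * E g := by
    intro f g
    rw [hE]
    show (trunc K (f * g)).eval₂ c b = (trunc K f).eval₂ c b * (trunc K g).eval₂ c b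
    rw [← Polynomial.eval₂_mul]
    apply evalcongr
    intro i hi
    rw [coeff_trunc, if_pos hi, coeff_mul_eq_coeff_trunc_mul_trunc f g hi,
      ← Polynomial.coe_mul, Polynomial.coeff_coe]
  have E_add : ∀ f g : PowerSeries ℤ, E (f + g) = E f + E g := by
    intro f g
    rw [hE]
    show (trunc K (f + g)).eval₂ c b = _
    rw [map_add, Polynomial.eval₂_add]
  have E_zero : E 0 = 0 := by
    rw [hE]; show (trunc K 0).eval₂ c b = 0; rw [map_zero]; simp
  set Ψ : PowerSeries ℤ →+* PowerSeries ℤ ⧸ Ifil (n + 1) :=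
    { toFun := E, map_one' := E_one, map_mul' := E_mul, map_zero' := E_zero,
      map_add' := E_add } with hΨ
  have hΨapp : ∀ f, Ψ f = (trunc K f).eval₂ c b := fun f => rfl
  -- Ψ kills I_{n+1}
  have hker : ∀ a ∈ Ifil (n + 1), Ψ a = 0 := by
    intro a ha
    rw [hΨapp]
    apply evalzero
    intro i hi
    rw [coeff_trunc, if_pos hi]
    have hdvd : (X : PowerSeries ℤ) ^ K ∣ a := by
      rw [hIK] at ha; exact Ideal.mem_span_singleton.1 ha
    exact PowerSeries.X_pow_dvd_iff.1 hdvd i hi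
  refine ⟨Ideal.Quotient.lift _ Ψ hker, ?_, ?_⟩
  · -- filtration preservation
    intro m a ha
    obtain ⟨x, hx, rfl⟩ :=
      (Ideal.mem_map_iff_of_surjective _ Ideal.Quotient.mk_surjective).1 ha
    rw [Ideal.Quotient.lift_mk, hΨapp]
    set k : ℕ := (m + 3) / 4 with hk
    have hxdvd : (X : PowerSeries ℤ) ^ k ∣ x := Ideal.mem_span_singleton.1 hx
    have hpolydvd : (Polynomial.X : Polynomial ℤ) ^ k ∣ trunc K x := by
      rw [Polynomial.X_pow_dvd_iff]
      intro d hd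
      rw [coeff_trunc]
      split
      · rename_i hdK
        exact PowerSeries.X_pow_dvd_iff.1 hxdvd d hd
      · rfl
    obtain ⟨r, hr⟩ := hpolydvd
    rw [hr, Polynomial.eval₂_mul, Polynomial.eval₂_X_pow]
    apply Ideal.mul_mem_right
    have : b ^ k = Ideal.Quotient.mk (Ifil (n + 1)) ((X * h) ^ k) := by
      rw [hb, map_pow]
    rw [this]
    apply Ideal.mem_map_of_mem
    rw [Ifil, Ideal.mem_span_singleton, mul_pow]
    exact ⟨h ^ k, rfl⟩
  · -- compatibility with φ
    intro x
    rw [Ideal.Quotient.lift_mk, hΨapp]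
    set F := Ideal.Quotient.factor (Ifil_antitone n) with hF
    -- push F inside eval₂
    rw [Polynomial.hom_eval₂]
    have hcomp : F.comp c = Int.castRingHom _ := by
      apply RingHom.ext_int
    have hFb : F b = φ (Ideal.Quotient.mk (Ifil n) X) := by
      rw [hb, hF]
      show Ideal.Quotient.factor _ (Ideal.Quotient.mk _ (X * h)) = _
      rw [Ideal.Quotient.factor_mk, hwX]
    rw [hcomp, hFb]
    -- now: eval₂ intCast (φ X̄) (trunc K x) = φ (mk x)
    have hpoly : ∀ p : Polynomial ℤ,
        p.eval₂ (Int.castRingHom _) (φ (Ideal.Quotient.mk (Ifil n) X))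
          = φ (Ideal.Quotient.mk (Ifil n) (p : PowerSeries ℤ)) := by
      intro p
      have key : Polynomial.eval₂RingHom (Int.castRingHom (PowerSeries ℤ ⧸ Ifil n))
            (φ (Ideal.Quotient.mk (Ifil n) X))
          = ((φ : (PowerSeries ℤ ⧸ Ifil n) →+* (PowerSeries ℤ ⧸ Ifil n)).comp
              (Ideal.Quotient.mk (Ifil n))).comp
              (Polynomial.coeToPowerSeries.ringHom) := by
        apply Polynomial.ringHom_ext
        · intro a
          have h1 : (Polynomial.C a : Polynomial ℤ) = (a : Polynomial ℤ) := by
            simp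
          rw [h1, map_intCast, map_intCast]
        · simp only [Polynomial.coe_eval₂RingHom, Polynomial.eval₂_X, RingHom.comp_apply,
            Polynomial.coeToPowerSeries.ringHom_apply, Polynomial.coe_X]
          rfl
      have := congrArg (fun g => g p) key
      simpa using this
    rw [hpoly]
    congr 1
    rw [Ideal.Quotient.mk_eq_mk_iff_sub_mem]
    have hKn : (n + 3) / 4 ≤ K := by
      rw [hKdef]; exact Nat.div_le_div_right (by omega)
    rw [Ifil, Ideal.mem_span_singleton]
    apply dvd_trans (pow_dvd_pow _ hKn)
    rw [PowerSeries.X_pow_dvd_iff]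
    intro m hm
    rw [map_sub, Polynomial.coeff_coe, coeff_trunc, if_pos hm, sub_self]
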